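/- Suppose σ = 0. Then for every positive integer ℓ the functions cos(2πℓx) and sin(2πℓx) satisfy, for almost every x ∈ I, ℒ(cos 2πℓ·)(x) = (χ₁(κ;ℓ,q) − b₁)·cos(2πℓx) and ℒ(sin 2πℓ·)(x) = (χ₁(κ;ℓ,q) − b₁)·sin(2πℓx); that is, they are eigenfunctions of ℒ for the eigenvalue χ₁(κ;ℓ,q) − b₁. -/
import Mathlib


open MeasureTheory Real Set Filter
open scoped ENNReal

noncomputable section

/-- Lebesgue measure restricted to the unit interval `I = [0,1]`. -/
def muI : Measure ℝ := volume.restrict (Set.Icc (0:ℝ) 1)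

/-- The nearest-neighbor graphon `W(x,y) = 1` if `|x-y| ≤ κ` or `|x-y| ≥ 1-κ`, else `0`. -/
def Wnn (κ : ℝ) (x y : ℝ) : ℝ := if |x - y| ≤ κ ∨ |x - y| ≥ 1 - κ then 1 else 0

/-- The linearization operator `ℒ` on `L²(I; ℂ)`, given pointwise:
`(ℒφ)(x) = ∫_I W(x,y) cos(2πq(y−x)+σ)(φ(y)−φ(x)) dy − b₁ φ(x)`. -/
def Lop (κ : ℝ) (q : ℕ) (σ b₁ : ℝ) (φ : ℝ → ℂ) (x : ℝ) : ℂ :=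
  (∫ y in Set.Icc (0:ℝ) 1,
      (Wnn κ x y : ℂ) * (Real.cos (2 * π * q * (y - x) + σ) : ℂ) * (φ y - φ x))
    - (b₁ : ℂ) * φ x

/-- The quantity `χ₁(κ; ℓ, q)`. -/
def chi1 (κ : ℝ) (l q : ℕ) : ℝ :=
  if l = q then
    κ + Real.sin (4 * π * q * κ) / (4 * π * q) - Real.sin (2 * π * q * κ) / (π * q)
  else
    Real.sin (2 * π * ((l:ℝ) - q) * κ) / (2 * π * ((l:ℝ) - q))
      + Real.sin (2 * π * ((l:ℝ) + q) * κ) / (2 * π * ((l:ℝ) + q))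
      - Real.sin (2 * π * q * κ) / (π * q)

/-! ### Auxiliary trigonometric integral computations -/

lemma ofReal_setIntegral (f : ℝ → ℝ) (s : Set ℝ) :
    ∫ y in s, (f y : ℂ) = ((∫ y in s, f y : ℝ) : ℂ) :=
  integral_ofReal

lemma int_cos_mul {c : ℝ} (hc : c ≠ 0) (κ : ℝ) :
    ∫ u in (-κ)..κ, Real.cos (c * u) = 2 * Real.sin (c * κ) / c := by
  rw [intervalIntegral.integral_comp_mul_left Real.cos hc, integral_cos]
  rw [mul_neg, Real.sin_neg, smul_eq_mul]
  field_simp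
  ring

lemma int_cos_any (c κ : ℝ) :
    ∫ u in (-κ)..κ, Real.cos (c * u) = if c = 0 then 2 * κ else 2 * Real.sin (c * κ) / c := by
  by_cases hc : c = 0
  · simp [hc]; ring
  · rw [if_neg hc, int_cos_mul hc]

lemma int_sin_symm (c κ : ℝ) : ∫ u in (-κ)..κ, Real.sin (c * u) = 0 := by
  by_cases hc : c = 0
  · simp [hc]
  · rw [intervalIntegral.integral_comp_mul_left Real.sin hc, integral_sin]
    rw [mul_neg, Real.cos_neg]
    simp

lemma int_cossin (a b κ : ℝ) :
    ∫ u in (-κ)..κ, Real.cos (a * u) * Real.sin (b * u) = 0 := by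
  have h : ∫ u in (-κ)..κ, Real.cos (a * u) * Real.sin (b * u)
      = ∫ u in (-κ)..κ, (Real.sin ((b + a) * u) + Real.sin ((b - a) * u)) / 2 := by
    apply intervalIntegral.integral_congr
    intro u _
    simp only
    rw [add_mul, sub_mul, Real.sin_add, Real.sin_sub]
    ring
  have i1 : IntervalIntegrable (fun u => Real.sin ((b + a) * u)) volume (-κ) κ :=
    (Real.continuous_sin.comp (continuous_const.mul continuous_id)).intervalIntegrable _ _
  have i2 : IntervalIntegrable (fun u => Real.sin ((b - a) * u)) volume (-κ) κ :=
    (Real.continuous_sin.comp (continuous_const.mul continuous_id)).intervalIntegrable _ _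
  rw [h, intervalIntegral.integral_div, intervalIntegral.integral_add i1 i2,
    int_sin_symm, int_sin_symm]
  norm_num

lemma int_coscos (q l : ℕ) (hq : 0 < q) (hl : 0 < l) (κ : ℝ) :
    ∫ u in (-κ)..κ, Real.cos (2*π*q*u) * Real.cos (2*π*l*u)
      = chi1 κ l q + Real.sin (2*π*q*κ) / (π*q) := by
  have hπ : (π : ℝ) ≠ 0 := Real.pi_ne_zero
  have hqr : ((q:ℝ)) ≠ 0 := Nat.cast_ne_zero.mpr hq.ne'
  have hlqr : ((l:ℝ) + q) ≠ 0 := by positivity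
  have h : ∫ u in (-κ)..κ, Real.cos (2*π*q*u) * Real.cos (2*π*l*u)
      = ∫ u in (-κ)..κ,
          (Real.cos ((2*π*((l:ℝ)-q)) * u) + Real.cos ((2*π*((l:ℝ)+q)) * u)) / 2 := by
    apply intervalIntegral.integral_congr
    intro u _
    simp only
    rw [show (2*π*((l:ℝ)-q)) * u = 2*π*l*u - 2*π*q*u by ring,
        show (2*π*((l:ℝ)+q)) * u = 2*π*l*u + 2*π*q*u by ring,
        Real.cos_sub, Real.cos_add]
    ring
  have i1 : IntervalIntegrable (fun u => Real.cos ((2*π*((l:ℝ)-q)) * u)) volume (-κ) κ :=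
    (Real.continuous_cos.comp (continuous_const.mul continuous_id)).intervalIntegrable _ _
  have i2 : IntervalIntegrable (fun u => Real.cos ((2*π*((l:ℝ)+q)) * u)) volume (-κ) κ :=
    (Real.continuous_cos.comp (continuous_const.mul continuous_id)).intervalIntegrable _ _
  rw [h, intervalIntegral.integral_div, intervalIntegral.integral_add i1 i2,
      int_cos_any, int_cos_any]
  by_cases hlq : l = q
  · subst hlq
    rw [chi1, if_pos rfl]
    rw [if_pos (by ring), if_neg (by positivity)]
    rw [show (2*π*((l:ℝ)+l)) * κ = 4*π*l*κ by ring]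
    have h4 : (4*π*(l:ℝ)) ≠ 0 := by positivity
    field_simp
    ring
  · have hlq' : ((l:ℝ) - q) ≠ 0 := by
      intro hcon
      exact hlq (Nat.cast_injective (by linarith : ((l:ℝ)) = q))
    rw [chi1, if_neg hlq]
    rw [if_neg (by simp [hπ, hlq']), if_neg (by simp [hπ, hlqr])]
    field_simp
    ring

/-! ### Reduction of the graphon integral to an interval integral -/

lemma periodic_shift {h : ℝ → ℝ} (hp : Function.Periodic h 1) (a b : ℝ) :
    ∫ y in (a+1)..(b+1), h y = ∫ y in a..b, h y := by
  rw [← intervalIntegral.integral_comp_add_right h 1]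
  exact intervalIntegral.integral_congr fun y _ => hp y

lemma wnn_integral_eq (κ : ℝ) (hκ0 : 0 < κ) (hκ : κ ≤ 1/2) (x : ℝ)
    (hx : x ∈ Set.Ioo (0:ℝ) 1) (hx1 : x ≠ κ) (hx2 : x ≠ 1 - κ)
    (h : ℝ → ℝ) (hc : Continuous h) (hp : Function.Periodic h 1) :
    ∫ y in Set.Icc (0:ℝ) 1, Wnn κ x y * h y = ∫ u in (x - κ)..(x + κ), h u := by
  obtain ⟨hx0, hx1'⟩ := hx
  set S : Set ℝ := {y | |x - y| ≤ κ ∨ |x - y| ≥ 1 - κ} with hS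
  have hSm : MeasurableSet S := by
    apply MeasurableSet.union
    · exact measurableSet_le ((continuous_const.sub continuous_id).abs.measurable) measurable_const
    · exact measurableSet_le measurable_const ((continuous_const.sub continuous_id).abs.measurable)
  have hind : ∀ y, Wnn κ x y * h y = S.indicator h y := by
    intro y
    by_cases hy : y ∈ S
    · rw [Set.indicator_of_mem hy, Wnn, if_pos (by exact hy), one_mul]
    · rw [Set.indicator_of_notMem hy, Wnn, if_neg (by exact hy), zero_mul]
  rw [show (fun y => Wnn κ x y * h y) = fun y => S.indicator h y from funext hind]
  rw [MeasureTheory.setIntegral_indicator hSm]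
  have hii : ∀ a b : ℝ, IntervalIntegrable h volume a b := fun a b => hc.intervalIntegrable a b
  rcases lt_or_gt_of_ne hx1 with hxκ | hxκ
  · -- Case B : x < κ
    have hset : Set.Icc (0:ℝ) 1 ∩ S = Set.Icc 0 (x+κ) ∪ Set.Icc (x+1-κ) 1 := by
      ext y
      simp only [hS, Set.mem_inter_iff, Set.mem_Icc, Set.mem_setOf_eq, Set.mem_union, ge_iff_le]
      constructor
      · rintro ⟨⟨h0, h1⟩, hor⟩
        rcases hor with habs | habs
        · rw [abs_le] at habs
          exact Or.inl ⟨h0, by linarith [habs.1]⟩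
        · rw [le_abs] at habs
          rcases habs with hd | hd
          · exfalso; linarith
          · exact Or.inr ⟨by linarith, h1⟩
      · rintro (⟨h0, h1⟩ | ⟨h0, h1⟩)
        · exact ⟨⟨h0, by linarith⟩, Or.inl (by rw [abs_le]; constructor <;> linarith)⟩
        · exact ⟨⟨by linarith, h1⟩, Or.inr (by rw [le_abs]; right; linarith)⟩
    have hdisj : AEDisjoint volume (Set.Icc (0:ℝ) (x+κ)) (Set.Icc (x+1-κ) 1) := by
      show volume _ = 0
      rw [Set.Icc_inter_Icc, Real.volume_Icc]
      apply ENNReal.ofReal_eq_zero.mpr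
      rw [max_eq_right (by linarith), min_eq_left (by linarith)]
      linarith
    rw [hset, MeasureTheory.integral_union_ae hdisj measurableSet_Icc.nullMeasurableSet
      (hc.integrableOn_Icc) (hc.integrableOn_Icc)]
    have e1 : ∫ y in Set.Icc (0:ℝ) (x+κ), h y = ∫ y in (0:ℝ)..(x+κ), h y := by
      rw [intervalIntegral.integral_of_le (by linarith), MeasureTheory.integral_Icc_eq_integral_Ioc]
    have e2 : ∫ y in Set.Icc (x+1-κ) (1:ℝ), h y = ∫ y in (x+1-κ)..(1:ℝ), h y := by
      rw [intervalIntegral.integral_of_le (by linarith), MeasureTheory.integral_Icc_eq_integral_Ioc]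
    have e3 : ∫ y in (x+1-κ)..(1:ℝ), h y = ∫ y in (x-κ)..(0:ℝ), h y := by
      have := periodic_shift hp (x-κ) 0
      rw [show x-κ+1 = x+1-κ by ring, zero_add] at this
      exact this
    rw [e1, e2, e3, ← intervalIntegral.integral_add_adjacent_intervals (hii (x-κ) 0) (hii 0 (x+κ))]
    ring
  · rcases lt_or_gt_of_ne hx2 with hxκ' | hxκ'
    · -- Case A : κ < x < 1 - κ
      have hset : Set.Icc (0:ℝ) 1 ∩ S = Set.Icc (x-κ) (x+κ) := by
        ext y
        simp only [hS, Set.mem_inter_iff, Set.mem_Icc, Set.mem_setOf_eq, ge_iff_le]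
        constructor
        · rintro ⟨⟨h0, h1⟩, hor⟩
          rcases hor with habs | habs
          · rw [abs_le] at habs
            exact ⟨by linarith [habs.2], by linarith [habs.1]⟩
          · rw [le_abs] at habs
            rcases habs with hd | hd
            · exfalso; linarith
            · exfalso; linarith
        · rintro ⟨h0, h1⟩
          exact ⟨⟨by linarith, by linarith⟩, Or.inl (by rw [abs_le]; constructor <;> linarith)⟩
      rw [hset, MeasureTheory.integral_Icc_eq_integral_Ioc,
        ← intervalIntegral.integral_of_le (by linarith : x-κ ≤ x+κ)]
    · -- Case C : 1 - κ < x
      have hset : Set.Icc (0:ℝ) 1 ∩ S = Set.Icc 0 (x-1+κ) ∪ Set.Icc (x-κ) 1 := by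
        ext y
        simp only [hS, Set.mem_inter_iff, Set.mem_Icc, Set.mem_setOf_eq, Set.mem_union, ge_iff_le]
        constructor
        · rintro ⟨⟨h0, h1⟩, hor⟩
          rcases hor with habs | habs
          · rw [abs_le] at habs
            exact Or.inr ⟨by linarith [habs.2], h1⟩
          · rw [le_abs] at habs
            rcases habs with hd | hd
            · exact Or.inl ⟨h0, by linarith⟩
            · exfalso; linarith
        · rintro (⟨h0, h1⟩ | ⟨h0, h1⟩)
          · exact ⟨⟨h0, by linarith⟩, Or.inr (by rw [le_abs]; left; linarith)⟩
          · exact ⟨⟨by linarith, h1⟩, Or.inl (by rw [abs_le]; constructor <;> linarith)⟩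
      have hdisj : AEDisjoint volume (Set.Icc (0:ℝ) (x-1+κ)) (Set.Icc (x-κ) 1) := by
        show volume _ = 0
        rw [Set.Icc_inter_Icc, Real.volume_Icc]
        apply ENNReal.ofReal_eq_zero.mpr
        rw [max_eq_right (by linarith), min_eq_left (by linarith)]
        linarith
      rw [hset, MeasureTheory.integral_union_ae hdisj measurableSet_Icc.nullMeasurableSet
        (hc.integrableOn_Icc) (hc.integrableOn_Icc)]
      have e1 : ∫ y in Set.Icc (0:ℝ) (x-1+κ), h y = ∫ y in (0:ℝ)..(x-1+κ), h y := by
        rw [intervalIntegral.integral_of_le (by linarith),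
          MeasureTheory.integral_Icc_eq_integral_Ioc]
      have e2 : ∫ y in Set.Icc (x-κ) (1:ℝ), h y = ∫ y in (x-κ)..(1:ℝ), h y := by
        rw [intervalIntegral.integral_of_le (by linarith),
          MeasureTheory.integral_Icc_eq_integral_Ioc]
      have e3 : ∫ y in (1:ℝ)..(x+κ), h y = ∫ y in (0:ℝ)..(x-1+κ), h y := by
        have := periodic_shift hp 0 (x-1+κ)
        rw [show x-1+κ+1 = x+κ by ring, zero_add] at this
        exact this
      rw [e1, e2, ← e3,
        ← intervalIntegral.integral_add_adjacent_intervals (hii (x-κ) 1) (hii 1 (x+κ))]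
      ring

/-! ### The core eigenvalue computation -/

lemma core (κ : ℝ) (hκ0 : 0 < κ) (hκ : κ ≤ 1/2) (q l : ℕ) (hq : 0 < q) (hl : 0 < l)
    (x : ℝ) (hx : x ∈ Set.Ioo (0:ℝ) 1) (hx1 : x ≠ κ) (hx2 : x ≠ 1 - κ)
    (g gd : ℝ → ℝ) (hgc : Continuous g) (hgp : Function.Periodic g 1)
    (hdec : ∀ u, g (x + u) = g x * Real.cos (2*π*l*u) + gd x * Real.sin (2*π*l*u)) :
    ∫ y in Set.Icc (0:ℝ) 1, Wnn κ x y * Real.cos (2*π*q*(y-x)) * (g y - g x)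
      = chi1 κ l q * g x := by
  have hπ : (0:ℝ) < π := Real.pi_pos
  have hqr : ((q:ℝ)) ≠ 0 := Nat.cast_ne_zero.mpr hq.ne'
  have hcc : Continuous (fun y : ℝ => Real.cos (2*π*q*(y-x))) :=
    Real.continuous_cos.comp (continuous_const.mul (continuous_id.sub continuous_const))
  have hh : Continuous (fun y => Real.cos (2*π*q*(y-x)) * (g y - g x)) :=
    hcc.mul (hgc.sub continuous_const)
  have hhp : Function.Periodic (fun y => Real.cos (2*π*q*(y-x)) * (g y - g x)) 1 := by
    intro y
    simp only
    rw [hgp y]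
    congr 1
    rw [show 2*π*(q:ℝ)*(y+1-x) = 2*π*q*(y-x) + (q:ℤ)*(2*π) by push_cast; ring,
       Real.cos_add_int_mul_two_pi]
  have step1 : ∫ y in Set.Icc (0:ℝ) 1, Wnn κ x y * Real.cos (2*π*q*(y-x)) * (g y - g x)
      = ∫ y in (x-κ)..(x+κ), Real.cos (2*π*q*(y-x)) * (g y - g x) := by
    rw [← wnn_integral_eq κ hκ0 hκ x hx hx1 hx2 _ hh hhp]
    simp_rw [mul_assoc]
  have step2 : ∫ y in (x-κ)..(x+κ), Real.cos (2*π*q*(y-x)) * (g y - g x)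
      = ∫ u in (-κ)..κ, Real.cos (2*π*q*u) * (g (x+u) - g x) := by
    have h0 := intervalIntegral.integral_comp_add_left
      (a := -κ) (b := κ) (fun y => Real.cos (2*π*q*(y-x)) * (g y - g x)) x
    rw [show x + -κ = x - κ by ring] at h0
    rw [← h0]
    apply intervalIntegral.integral_congr
    intro u _
    simp only
    rw [show x + u - x = u by ring]
  have step3 : ∫ u in (-κ)..κ, Real.cos (2*π*q*u) * (g (x+u) - g x)
      = ∫ u in (-κ)..κ, (g x * (Real.cos (2*π*q*u) * Real.cos (2*π*l*u))
          + gd x * (Real.cos (2*π*q*u) * Real.sin (2*π*l*u))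
          - g x * Real.cos (2*π*q*u)) := by
    apply intervalIntegral.integral_congr
    intro u _
    simp only
    rw [hdec u]
    ring
  have hc1 : Continuous (fun u : ℝ => Real.cos (2*π*q*u)) :=
    Real.continuous_cos.comp (continuous_const.mul continuous_id)
  have hc2 : Continuous (fun u : ℝ => Real.cos (2*π*l*u)) :=
    Real.continuous_cos.comp (continuous_const.mul continuous_id)
  have hc3 : Continuous (fun u : ℝ => Real.sin (2*π*l*u)) :=
    Real.continuous_sin.comp (continuous_const.mul continuous_id)
  have i1 : IntervalIntegrable
      (fun u => g x * (Real.cos (2*π*q*u) * Real.cos (2*π*l*u))) volume (-κ) κ :=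
    (continuous_const.mul (hc1.mul hc2)).intervalIntegrable _ _
  have i2 : IntervalIntegrable
      (fun u => gd x * (Real.cos (2*π*q*u) * Real.sin (2*π*l*u))) volume (-κ) κ :=
    (continuous_const.mul (hc1.mul hc3)).intervalIntegrable _ _
  have i3 : IntervalIntegrable (fun u => g x * Real.cos (2*π*q*u)) volume (-κ) κ :=
    (continuous_const.mul hc1).intervalIntegrable _ _
  rw [step1, step2, step3, intervalIntegral.integral_sub (i1.add i2) i3,
    intervalIntegral.integral_add i1 i2, intervalIntegral.integral_const_mul,
    intervalIntegral.integral_const_mul, intervalIntegral.integral_const_mul,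
    int_coscos q l hq hl κ, int_cossin, int_cos_mul (by positivity : (2*π*(q:ℝ)) ≠ 0)]
  field_simp
  ring

lemma core_cos (κ : ℝ) (hκ0 : 0 < κ) (hκ : κ ≤ 1/2) (q l : ℕ) (hq : 0 < q) (hl : 0 < l)
    (x : ℝ) (hx : x ∈ Set.Ioo (0:ℝ) 1) (hx1 : x ≠ κ) (hx2 : x ≠ 1 - κ) :
    ∫ y in Set.Icc (0:ℝ) 1,
        Wnn κ x y * Real.cos (2*π*q*(y-x)) * (Real.cos (2*π*l*y) - Real.cos (2*π*l*x))
      = chi1 κ l q * Real.cos (2*π*l*x) := by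
  apply core κ hκ0 hκ q l hq hl x hx hx1 hx2 (fun y => Real.cos (2*π*l*y))
    (fun y => -Real.sin (2*π*l*y))
  · exact Real.continuous_cos.comp (continuous_const.mul continuous_id)
  · intro y
    show Real.cos (2*π*(l:ℝ)*(y+1)) = Real.cos (2*π*(l:ℝ)*y)
    rw [show 2*π*(l:ℝ)*(y+1) = 2*π*l*y + (l:ℤ)*(2*π) by push_cast; ring,
      Real.cos_add_int_mul_two_pi]
  · intro u
    show Real.cos (2*π*(l:ℝ)*(x+u))
      = Real.cos (2*π*(l:ℝ)*x) * Real.cos (2*π*(l:ℝ)*u)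
        + (-Real.sin (2*π*(l:ℝ)*x)) * Real.sin (2*π*(l:ℝ)*u)
    rw [show 2*π*(l:ℝ)*(x+u) = 2*π*l*x + 2*π*l*u by ring, Real.cos_add]
    ring

lemma core_sin (κ : ℝ) (hκ0 : 0 < κ) (hκ : κ ≤ 1/2) (q l : ℕ) (hq : 0 < q) (hl : 0 < l)
    (x : ℝ) (hx : x ∈ Set.Ioo (0:ℝ) 1) (hx1 : x ≠ κ) (hx2 : x ≠ 1 - κ) :
    ∫ y in Set.Icc (0:ℝ) 1,
        Wnn κ x y * Real.cos (2*π*q*(y-x)) * (Real.sin (2*π*l*y) - Real.sin (2*π*l*x))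
      = chi1 κ l q * Real.sin (2*π*l*x) := by
  apply core κ hκ0 hκ q l hq hl x hx hx1 hx2 (fun y => Real.sin (2*π*l*y))
    (fun y => Real.cos (2*π*l*y))
  · exact Real.continuous_sin.comp (continuous_const.mul continuous_id)
  · intro y
    show Real.sin (2*π*(l:ℝ)*(y+1)) = Real.sin (2*π*(l:ℝ)*y)
    rw [show 2*π*(l:ℝ)*(y+1) = 2*π*l*y + (l:ℤ)*(2*π) by push_cast; ring,
      Real.sin_add_int_mul_two_pi]
  · intro u
    show Real.sin (2*π*(l:ℝ)*(x+u))
      = Real.sin (2*π*(l:ℝ)*x) * Real.cos (2*π*(l:ℝ)*u)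
        + Real.cos (2*π*(l:ℝ)*x) * Real.sin (2*π*(l:ℝ)*u)
    rw [show 2*π*(l:ℝ)*(x+u) = 2*π*l*x + 2*π*l*u by ring, Real.sin_add]

/-- For zero phase-lag, `cos(2πℓx)` and `sin(2πℓx)` are eigenfunctions
of `ℒ` for the eigenvalue `χ₁(κ;ℓ,q) − b₁`. -/
theorem stmt9 (κ : ℝ) (q : ℕ) (σ b₁ : ℝ)
    (hκ : κ ∈ Set.Ioc (0:ℝ) (1/2)) (hq : 0 < q)
    (hσ0 : σ = 0) :
    ∀ l : ℕ, 0 < l →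
      (∀ᵐ x ∂muI,
        Lop κ q σ b₁ (fun y => ((Real.cos (2 * π * l * y) : ℝ) : ℂ)) x
          = ((chi1 κ l q - b₁ : ℝ) : ℂ) * ((Real.cos (2 * π * l * x) : ℝ) : ℂ)) ∧
      (∀ᵐ x ∂muI,
        Lop κ q σ b₁ (fun y => ((Real.sin (2 * π * l * y) : ℝ) : ℂ)) x
          = ((chi1 κ l q - b₁ : ℝ) : ℂ) * ((Real.sin (2 * π * l * x) : ℝ) : ℂ)) := by
  obtain ⟨hκ0, hκ2⟩ := hκ
  intro l hl
  have hbad : ∀ᵐ x ∂muI, x ∈ Set.Ioo (0:ℝ) 1 ∧ x ≠ κ ∧ x ≠ 1 - κ := by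
    have hv : volume ({0, 1, κ, 1-κ} : Set ℝ) = 0 := by
      apply Set.Finite.measure_zero _ volume
      exact Set.toFinite _
    have h1 : ∀ᵐ x ∂muI, x ∉ ({0, 1, κ, 1-κ} : Set ℝ) := by
      unfold muI
      exact ae_restrict_of_ae (measure_eq_zero_iff_ae_notMem.mp hv)
    have h2 : ∀ᵐ x ∂muI, x ∈ Set.Icc (0:ℝ) 1 := by
      unfold muI
      exact ae_restrict_mem measurableSet_Icc
    filter_upwards [h1, h2] with x hxn hxm
    simp only [Set.mem_insert_iff, Set.mem_singleton_iff, not_or] at hxn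
    obtain ⟨hne0, hne1, hneκ, hneκ'⟩ := hxn
    exact ⟨⟨lt_of_le_of_ne hxm.1 (Ne.symm hne0), lt_of_le_of_ne hxm.2 hne1⟩, hneκ, hneκ'⟩
  constructor
  · filter_upwards [hbad] with x hx
    obtain ⟨hxI, hne1, hne2⟩ := hx
    rw [Lop, hσ0]
    have hcast : (fun y => ((Wnn κ x y : ℝ):ℂ) * ((Real.cos (2*π*q*(y-x) + 0) : ℝ):ℂ)
          * (((Real.cos (2*π*l*y):ℝ):ℂ) - ((Real.cos (2*π*l*x):ℝ):ℂ)))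
        = fun y => ((Wnn κ x y * Real.cos (2*π*q*(y-x))
          * (Real.cos (2*π*l*y) - Real.cos (2*π*l*x)) : ℝ) : ℂ) := by
      funext y
      rw [add_zero]
      push_cast
      ring
    rw [hcast, ofReal_setIntegral,
      core_cos κ hκ0 hκ2 q l hq hl x hxI hne1 hne2]
    push_cast
    ring
  · filter_upwards [hbad] with x hx
    obtain ⟨hxI, hne1, hne2⟩ := hx
    rw [Lop, hσ0]
    have hcast : (fun y => ((Wnn κ x y : ℝ):ℂ) * ((Real.cos (2*π*q*(y-x) + 0) : ℝ):ℂ)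
          * (((Real.sin (2*π*l*y):ℝ):ℂ) - ((Real.sin (2*π*l*x):ℝ):ℂ)))
        = fun y => ((Wnn κ x y * Real.cos (2*π*q*(y-x))
          * (Real.sin (2*π*l*y) - Real.sin (2*π*l*x)) : ℝ) : ℂ) := by
      funext y
      rw [add_zero]
      push_cast
      ring
    rw [hcast, ofReal_setIntegral,
      core_sin κ hκ0 hκ2 q l hq hl x hxI hne1 hne2]
    push_cast
    ring
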